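/- arXiv:1709.10039 — 6 statements merged into one kernel-verified Lean document; each statement's English description precedes it below -/
import Mathlib

section
/- Let q be a t-hierarchical query, let free(q) denote its free variables, and for each subset Z of free(q) let A_Z be the set of atoms ψ with Vars(ψ) ⊋ (Vars(ψ) ∩ free(q)) = Z. Then for any two distinct subsets Z, Z' of free(q), the sets of non-free variables occurring in atoms of A_Z and in atoms of A_{Z'} are disjoint. That is, if Y_Z = (⋃_{ψ ∈ A_Z} Vars(ψ)) \ Z and Y_{Z'} = (⋃_{ψ ∈ A_{Z'}} Vars(ψ)) \ Z', then Y_Z ∩ Y_{Z'} = ∅. -/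
/-! A non-free variable `y` occurring in an atom `ψ` forces, by condition (ii), every free
variable of `ψ` into every other atom containing `y`: `atoms(y)` meets `atoms(z)` in `ψ` for
each free `z ∈ Vars(ψ)`, so `atoms(y) ⊆ atoms(z)`. Hence two atoms sharing `y` have the same
free variables, and `y` cannot lie in both `Y_Z` and `Y_{Z'}` for `Z ≠ Z'`. -/

namespace Query

variable {V A : Type*} [DecidableEq V] [DecidableEq A]

/-- Condition (ii) of t-hierarchical queries. -/
def FreeNonfreeNested (atomSet : Finset A) (varsOf : A → Finset V) (free : Finset V) : Prop :=
  ∀ x ∈ free, ∀ y ∈ atomSet.biUnion varsOf, y ∉ free →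
    atomSet.filter (fun ψ => x ∈ varsOf ψ) ∩ atomSet.filter (fun ψ => y ∈ varsOf ψ) = ∅
      ∨ atomSet.filter (fun ψ => y ∈ varsOf ψ) ⊆ atomSet.filter (fun ψ => x ∈ varsOf ψ)

theorem FreeNonfreeNested.inter_free_subset {atomSet : Finset A} {varsOf : A → Finset V}
    {free : Finset V} (h : FreeNonfreeNested atomSet varsOf free) {y : V} (hy : y ∉ free)
    {φ φ' : A} (hφ : φ ∈ atomSet) (hφ' : φ' ∈ atomSet) (hyφ : y ∈ varsOf φ)
    (hyφ' : y ∈ varsOf φ') : varsOf φ ∩ free ⊆ varsOf φ' ∩ free := by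
  intro z hz
  obtain ⟨hzφ, hzfree⟩ := Finset.mem_inter.mp hz
  have hyUnion : y ∈ atomSet.biUnion varsOf := Finset.mem_biUnion.mpr ⟨φ, hφ, hyφ⟩
  rcases h z hzfree y hyUnion hy with hdisj | hsub
  · exact absurd hdisj (Finset.nonempty_iff_ne_empty.mp ⟨φ, by simp [hφ, hzφ, hyφ]⟩)
  · exact Finset.mem_inter.mpr
      ⟨(Finset.mem_filter.mp (hsub (Finset.mem_filter.mpr ⟨hφ', hyφ'⟩))).2, hzfree⟩

theorem FreeNonfreeNested.inter_free_eq {atomSet : Finset A} {varsOf : A → Finset V}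
    {free : Finset V} (h : FreeNonfreeNested atomSet varsOf free) {y : V} (hy : y ∉ free)
    {φ φ' : A} (hφ : φ ∈ atomSet) (hφ' : φ' ∈ atomSet) (hyφ : y ∈ varsOf φ)
    (hyφ' : y ∈ varsOf φ') : varsOf φ ∩ free = varsOf φ' ∩ free :=
  (h.inter_free_subset hy hφ hφ' hyφ hyφ').antisymm (h.inter_free_subset hy hφ' hφ hyφ' hyφ)

end Query

theorem YZ_disjoint_general {V A : Type*} [DecidableEq V] [DecidableEq A]
    (atomSet : Finset A) (varsOf : A → Finset V) (free : Finset V)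
    -- condition (ii) of t-hierarchical
    (ht2 : ∀ x ∈ free, ∀ y ∈ atomSet.biUnion varsOf, y ∉ free →
        atomSet.filter (fun ψ => x ∈ varsOf ψ) ∩ atomSet.filter (fun ψ => y ∈ varsOf ψ) = ∅
      ∨ atomSet.filter (fun ψ => y ∈ varsOf ψ) ⊆ atomSet.filter (fun ψ => x ∈ varsOf ψ))
    (Z Z' : Finset V) (hne : Z ≠ Z') :
    -- Y_Z ∩ Y_{Z'} = ∅, where A_Z = {ψ | Vars(ψ) ∩ free = Z ⊊ Vars(ψ)} and
    -- Y_Z = (⋃_{ψ ∈ A_Z} Vars(ψ)) \ Z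
    ((atomSet.filter (fun ψ => varsOf ψ ∩ free = Z ∧ Z ⊂ varsOf ψ)).biUnion varsOf \ Z)
      ∩ ((atomSet.filter (fun ψ => varsOf ψ ∩ free = Z' ∧ Z' ⊂ varsOf ψ)).biUnion varsOf \ Z')
      = ∅ := by
  rw [← Finset.disjoint_iff_inter_eq_empty, Finset.disjoint_left]
  simp only [Finset.mem_sdiff, Finset.mem_biUnion, Finset.mem_filter]
  rintro y ⟨⟨ψ, ⟨hψ, hψZ, -⟩, hyψ⟩, hyZ⟩ ⟨⟨ψ', ⟨hψ', hψ'Z', -⟩, hyψ'⟩, -⟩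
  have hyfree : y ∉ free := fun h => hyZ (hψZ ▸ Finset.mem_inter.mpr ⟨hyψ, h⟩)
  exact hne (hψZ ▸ hψ'Z' ▸ Query.FreeNonfreeNested.inter_free_eq ht2 hyfree hψ hψ' hyψ hyψ')

/-- in a t-hierarchical query, for distinct Z, Z' ⊆ free(q), the
non-free variable sets Y_Z and Y_{Z'} of the atom classes A_Z and A_{Z'}
are disjoint.

A query is given by a finite atom set `atomSet`, a variable set `varsOf ψ` for
each atom, and a set `free` of free variables; `atoms(x)` is the set of atoms
containing `x`. -/
theorem YZ_disjoint {V A : Type*} [DecidableEq V] [DecidableEq A]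
    (atomSet : Finset A) (varsOf : A → Finset V) (free : Finset V)
    -- condition (i) of t-hierarchical, for non-free variables
    (ht1 : ∀ x ∈ atomSet.biUnion varsOf, x ∉ free →
           ∀ y ∈ atomSet.biUnion varsOf, y ∉ free →
        atomSet.filter (fun ψ => x ∈ varsOf ψ) ⊆ atomSet.filter (fun ψ => y ∈ varsOf ψ)
      ∨ atomSet.filter (fun ψ => y ∈ varsOf ψ) ⊆ atomSet.filter (fun ψ => x ∈ varsOf ψ)
      ∨ atomSet.filter (fun ψ => x ∈ varsOf ψ) ∩ atomSet.filter (fun ψ => y ∈ varsOf ψ) = ∅)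
    -- condition (ii) of t-hierarchical
    (ht2 : ∀ x ∈ free, ∀ y ∈ atomSet.biUnion varsOf, y ∉ free →
        atomSet.filter (fun ψ => x ∈ varsOf ψ) ∩ atomSet.filter (fun ψ => y ∈ varsOf ψ) = ∅
      ∨ atomSet.filter (fun ψ => y ∈ varsOf ψ) ⊆ atomSet.filter (fun ψ => x ∈ varsOf ψ))
    (Z Z' : Finset V) (hZ : Z ⊆ free) (hZ' : Z' ⊆ free) (hne : Z ≠ Z') :
    -- Y_Z ∩ Y_{Z'} = ∅, where A_Z = {ψ | Vars(ψ) ∩ free = Z ⊊ Vars(ψ)} and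
    -- Y_Z = (⋃_{ψ ∈ A_Z} Vars(ψ)) \ Z
    ((atomSet.filter (fun ψ => varsOf ψ ∩ free = Z ∧ Z ⊂ varsOf ψ)).biUnion varsOf \ Z)
      ∩ ((atomSet.filter (fun ψ => varsOf ψ ∩ free = Z' ∧ Z' ⊂ varsOf ψ)).biUnion varsOf \ Z')
      = ∅ :=
  YZ_disjoint_general atomSet varsOf free ht2 Z Z' hne
end

section
/- Let q be a t-hierarchical query and Z a subset of free(q). Let A_Z be the set of atoms ψ of q with Vars(ψ) ⊋ (Vars(ψ) ∩ free(q)) = Z. Then the query q_Z whose atom set is A_Z, with variables ⋃_{ψ∈A_Z} Vars(ψ) and free variables Z, is q-hierarchical. -/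
/-!
On the atoms of `q_Z` every variable of `Z` occurs everywhere, so its atom set in `q_Z` is all of
`A_Z`, which makes it comparable with any other atom set, and no strict inclusion can start from
it. A variable of `q_Z` outside `Z` is not free in `q` at all, and for two such variables the
t-hierarchical condition on `q` survives restriction to the subset `A_Z` of atoms.
-/

namespace Finset

variable {α : Type*} [DecidableEq α]

theorem inter_comparable_or_disjoint {s t : Finset α} (u : Finset α)
    (h : s ⊆ t ∨ t ⊆ s ∨ s ∩ t = ∅) :
    u ∩ s ⊆ u ∩ t ∨ u ∩ t ⊆ u ∩ s ∨ u ∩ s ∩ (u ∩ t) = ∅ := by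
  rcases h with h | h | h
  · exact Or.inl (inter_subset_inter_left h)
  · exact Or.inr (Or.inl (inter_subset_inter_left h))
  · right; right
    rw [inter_inter_inter_comm, h, inter_empty]

theorem filter_comparable_or_disjoint_of_subset {B S : Finset α} {p q : α → Prop}
    [DecidablePred p] [DecidablePred q] (hB : B ⊆ S)
    (h : S.filter p ⊆ S.filter q ∨ S.filter q ⊆ S.filter p ∨ S.filter p ∩ S.filter q = ∅) :
    B.filter p ⊆ B.filter q ∨ B.filter q ⊆ B.filter p ∨ B.filter p ∩ B.filter q = ∅ := by
  have hrestrict : ∀ (r : α → Prop) [DecidablePred r], B.filter r = B ∩ S.filter r :=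
    fun r _ => by rw [inter_filter, inter_eq_left.mpr hB]
  simpa only [hrestrict] using inter_comparable_or_disjoint B h

end Finset

section Subquery

variable {V A : Type*} [DecidableEq V]

/-- The atom set `A_Z` of the subquery `q_Z`. -/
def subqueryAtoms (atomSet : Finset A) (varsOf : A → Finset V) (free Z : Finset V) : Finset A :=
  atomSet.filter (fun ψ => varsOf ψ ∩ free = Z ∧ Z ⊂ varsOf ψ)

variable {atomSet : Finset A} {varsOf : A → Finset V} {free Z : Finset V}

theorem filter_subqueryAtoms_of_mem {x : V} (hx : x ∈ Z) :
    (subqueryAtoms atomSet varsOf free Z).filter (fun ψ => x ∈ varsOf ψ)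
      = subqueryAtoms atomSet varsOf free Z :=
  Finset.filter_true_of_mem fun _ hψ => (Finset.mem_filter.mp hψ).2.2.subset hx

theorem mem_of_mem_vars_subqueryAtoms_of_mem_free {x : V}
    (hx : x ∈ (subqueryAtoms atomSet varsOf free Z).biUnion varsOf) (hxf : x ∈ free) : x ∈ Z := by
  obtain ⟨ψ, hψ, hxψ⟩ := Finset.mem_biUnion.mp hx
  rw [← (Finset.mem_filter.mp hψ).2.1]
  exact Finset.mem_inter.mpr ⟨hxψ, hxf⟩

theorem vars_subqueryAtoms_subset :
    (subqueryAtoms atomSet varsOf free Z).biUnion varsOf ⊆ atomSet.biUnion varsOf :=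
  Finset.biUnion_subset_biUnion_of_subset_left _ (Finset.filter_subset _ _)

end Subquery

theorem subquery_qZ_qHierarchical_general {V A : Type*} [DecidableEq V] [DecidableEq A]
    (atomSet : Finset A) (varsOf : A → Finset V) (free : Finset V)
    -- condition (i) of t-hierarchical, for non-free variables
    (ht1 : ∀ x ∈ atomSet.biUnion varsOf, x ∉ free →
           ∀ y ∈ atomSet.biUnion varsOf, y ∉ free →
        atomSet.filter (fun ψ => x ∈ varsOf ψ) ⊆ atomSet.filter (fun ψ => y ∈ varsOf ψ)
      ∨ atomSet.filter (fun ψ => y ∈ varsOf ψ) ⊆ atomSet.filter (fun ψ => x ∈ varsOf ψ)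
      ∨ atomSet.filter (fun ψ => x ∈ varsOf ψ) ∩ atomSet.filter (fun ψ => y ∈ varsOf ψ) = ∅)
    (Z : Finset V) :
    -- q_Z is q-hierarchical: condition (i) ...
    (∀ x ∈ (atomSet.filter (fun ψ => varsOf ψ ∩ free = Z ∧ Z ⊂ varsOf ψ)).biUnion varsOf,
     ∀ y ∈ (atomSet.filter (fun ψ => varsOf ψ ∩ free = Z ∧ Z ⊂ varsOf ψ)).biUnion varsOf,
        (atomSet.filter (fun ψ => varsOf ψ ∩ free = Z ∧ Z ⊂ varsOf ψ)).filter (fun ψ => x ∈ varsOf ψ)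
          ⊆ (atomSet.filter (fun ψ => varsOf ψ ∩ free = Z ∧ Z ⊂ varsOf ψ)).filter (fun ψ => y ∈ varsOf ψ)
      ∨ (atomSet.filter (fun ψ => varsOf ψ ∩ free = Z ∧ Z ⊂ varsOf ψ)).filter (fun ψ => y ∈ varsOf ψ)
          ⊆ (atomSet.filter (fun ψ => varsOf ψ ∩ free = Z ∧ Z ⊂ varsOf ψ)).filter (fun ψ => x ∈ varsOf ψ)
      ∨ (atomSet.filter (fun ψ => varsOf ψ ∩ free = Z ∧ Z ⊂ varsOf ψ)).filter (fun ψ => x ∈ varsOf ψ)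
          ∩ (atomSet.filter (fun ψ => varsOf ψ ∩ free = Z ∧ Z ⊂ varsOf ψ)).filter (fun ψ => y ∈ varsOf ψ) = ∅)
    -- ... and condition (ii), with free variables Z
    ∧ (∀ x ∈ (atomSet.filter (fun ψ => varsOf ψ ∩ free = Z ∧ Z ⊂ varsOf ψ)).biUnion varsOf,
       ∀ y ∈ (atomSet.filter (fun ψ => varsOf ψ ∩ free = Z ∧ Z ⊂ varsOf ψ)).biUnion varsOf,
        (atomSet.filter (fun ψ => varsOf ψ ∩ free = Z ∧ Z ⊂ varsOf ψ)).filter (fun ψ => x ∈ varsOf ψ)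
          ⊂ (atomSet.filter (fun ψ => varsOf ψ ∩ free = Z ∧ Z ⊂ varsOf ψ)).filter (fun ψ => y ∈ varsOf ψ)
        → x ∈ Z → y ∈ Z) := by
  rw [show atomSet.filter (fun ψ => varsOf ψ ∩ free = Z ∧ Z ⊂ varsOf ψ)
    = subqueryAtoms atomSet varsOf free Z from rfl]
  refine ⟨fun x hx y hy => ?_, fun x _ y _ hxy hxZ => ?_⟩
  · by_cases hxf : x ∈ free
    · rw [filter_subqueryAtoms_of_mem (mem_of_mem_vars_subqueryAtoms_of_mem_free hx hxf)]
      exact Or.inr (Or.inl (Finset.filter_subset _ _))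
    by_cases hyf : y ∈ free
    · rw [filter_subqueryAtoms_of_mem (mem_of_mem_vars_subqueryAtoms_of_mem_free hy hyf)]
      exact Or.inl (Finset.filter_subset _ _)
    exact Finset.filter_comparable_or_disjoint_of_subset (Finset.filter_subset _ _)
      (ht1 x (vars_subqueryAtoms_subset hx) hxf y (vars_subqueryAtoms_subset hy) hyf)
  · rw [filter_subqueryAtoms_of_mem hxZ] at hxy
    exact absurd (Finset.filter_subset _ _) hxy.not_subset

/-- for a t-hierarchical query q and Z ⊆ free(q), the subquery
q_Z with atom set A_Z = {ψ | Vars(ψ) ∩ free = Z ⊊ Vars(ψ)}, variables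
⋃_{ψ ∈ A_Z} Vars(ψ) and free variables Z, is q-hierarchical.
Here atoms_{q_Z}(x) = A_Z.filter (x ∈ varsOf ·). -/
theorem subquery_qZ_qHierarchical {V A : Type*} [DecidableEq V] [DecidableEq A]
    (atomSet : Finset A) (varsOf : A → Finset V) (free : Finset V)
    -- condition (i) of t-hierarchical, for non-free variables
    (ht1 : ∀ x ∈ atomSet.biUnion varsOf, x ∉ free →
           ∀ y ∈ atomSet.biUnion varsOf, y ∉ free →
        atomSet.filter (fun ψ => x ∈ varsOf ψ) ⊆ atomSet.filter (fun ψ => y ∈ varsOf ψ)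
      ∨ atomSet.filter (fun ψ => y ∈ varsOf ψ) ⊆ atomSet.filter (fun ψ => x ∈ varsOf ψ)
      ∨ atomSet.filter (fun ψ => x ∈ varsOf ψ) ∩ atomSet.filter (fun ψ => y ∈ varsOf ψ) = ∅)
    -- condition (ii) of t-hierarchical
    (ht2 : ∀ x ∈ free, ∀ y ∈ atomSet.biUnion varsOf, y ∉ free →
        atomSet.filter (fun ψ => x ∈ varsOf ψ) ∩ atomSet.filter (fun ψ => y ∈ varsOf ψ) = ∅
      ∨ atomSet.filter (fun ψ => y ∈ varsOf ψ) ⊆ atomSet.filter (fun ψ => x ∈ varsOf ψ))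
    (Z : Finset V) (hZ : Z ⊆ free) :
    -- q_Z is q-hierarchical: condition (i) ...
    (∀ x ∈ (atomSet.filter (fun ψ => varsOf ψ ∩ free = Z ∧ Z ⊂ varsOf ψ)).biUnion varsOf,
     ∀ y ∈ (atomSet.filter (fun ψ => varsOf ψ ∩ free = Z ∧ Z ⊂ varsOf ψ)).biUnion varsOf,
        (atomSet.filter (fun ψ => varsOf ψ ∩ free = Z ∧ Z ⊂ varsOf ψ)).filter (fun ψ => x ∈ varsOf ψ)
          ⊆ (atomSet.filter (fun ψ => varsOf ψ ∩ free = Z ∧ Z ⊂ varsOf ψ)).filter (fun ψ => y ∈ varsOf ψ)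
      ∨ (atomSet.filter (fun ψ => varsOf ψ ∩ free = Z ∧ Z ⊂ varsOf ψ)).filter (fun ψ => y ∈ varsOf ψ)
          ⊆ (atomSet.filter (fun ψ => varsOf ψ ∩ free = Z ∧ Z ⊂ varsOf ψ)).filter (fun ψ => x ∈ varsOf ψ)
      ∨ (atomSet.filter (fun ψ => varsOf ψ ∩ free = Z ∧ Z ⊂ varsOf ψ)).filter (fun ψ => x ∈ varsOf ψ)
          ∩ (atomSet.filter (fun ψ => varsOf ψ ∩ free = Z ∧ Z ⊂ varsOf ψ)).filter (fun ψ => y ∈ varsOf ψ) = ∅)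
    -- ... and condition (ii), with free variables Z
    ∧ (∀ x ∈ (atomSet.filter (fun ψ => varsOf ψ ∩ free = Z ∧ Z ⊂ varsOf ψ)).biUnion varsOf,
       ∀ y ∈ (atomSet.filter (fun ψ => varsOf ψ ∩ free = Z ∧ Z ⊂ varsOf ψ)).biUnion varsOf,
        (atomSet.filter (fun ψ => varsOf ψ ∩ free = Z ∧ Z ⊂ varsOf ψ)).filter (fun ψ => x ∈ varsOf ψ)
          ⊂ (atomSet.filter (fun ψ => varsOf ψ ∩ free = Z ∧ Z ⊂ varsOf ψ)).filter (fun ψ => y ∈ varsOf ψ)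
        → x ∈ Z → y ∈ Z) :=
  subquery_qZ_qHierarchical_general atomSet varsOf free ht1 Z
end

section
/- If a conjunctive query q is q-hierarchical, then its homomorphic core is q-hierarchical; similarly, if q is t-hierarchical, then its homomorphic core is t-hierarchical. -/
/-! Restricting a query to a subset `T` of its atoms replaces every atom set `atoms(x)` by
`atoms(x) ∩ T`. Intersecting with a fixed set preserves inclusions and disjointness, so the
trichotomy conditions survive. For the strictness condition one pulls back: if
`atoms(x) ∩ T ⊊ atoms(y) ∩ T` with the left side nonempty, then of the three cases for the
pair in the full query only `atoms(x) ⊊ atoms(y)` remains possible. -/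

namespace Finset

variable {α : Type*} [DecidableEq α]

def NestedOrDisjoint (s t : Finset α) : Prop :=
  s ⊆ t ∨ t ⊆ s ∨ s ∩ t = ∅

theorem inter_inter_eq_empty_of_inter_eq_empty {s t : Finset α} (h : s ∩ t = ∅)
    (u : Finset α) : s ∩ u ∩ (t ∩ u) = ∅ :=
  subset_empty.mp (h ▸ inter_subset_inter inter_subset_left inter_subset_left)

theorem NestedOrDisjoint.inter_right {s t : Finset α} (h : NestedOrDisjoint s t) (u : Finset α) :
    NestedOrDisjoint (s ∩ u) (t ∩ u) := by
  rcases h with h | h | h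
  · exact Or.inl (inter_subset_inter_right h)
  · exact Or.inr (Or.inl (inter_subset_inter_right h))
  · exact Or.inr (Or.inr (inter_inter_eq_empty_of_inter_eq_empty h u))

theorem NestedOrDisjoint.ssubset_of_inter_ssubset {s t u : Finset α} (h : NestedOrDisjoint s t)
    (hne : (s ∩ u).Nonempty) (hst : s ∩ u ⊂ t ∩ u) : s ⊂ t := by
  rcases h with h | h | h
  · exact ssubset_of_subset_not_subset h fun hts => hst.not_subset (inter_subset_inter_right hts)
  · exact absurd (inter_subset_inter_right h) hst.not_subset
  · obtain ⟨a, ha⟩ := hne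
    have : a ∈ s ∩ u ∩ (t ∩ u) := mem_inter.mpr ⟨ha, hst.subset ha⟩
    simp [inter_inter_eq_empty_of_inter_eq_empty h u] at this

end Finset

namespace ConjunctiveQuery

open Finset

variable {V A : Type*} [DecidableEq V]

/-- `atoms(x)` in the query with atom set `S`. -/
def atomsOf (S : Finset A) (varsOf : A → Finset V) (x : V) : Finset A :=
  S.filter fun ψ => x ∈ varsOf ψ

theorem atomsOf_of_subset {S T : Finset A} [DecidableEq A] (varsOf : A → Finset V) (hT : T ⊆ S)
    (x : V) : atomsOf T varsOf x = atomsOf S varsOf x ∩ T := by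
  rw [atomsOf, atomsOf, filter_inter, inter_eq_right.mpr hT]

theorem atomsOf_nonempty {S : Finset A} {varsOf : A → Finset V} {x : V}
    (hx : x ∈ S.biUnion varsOf) : (atomsOf S varsOf x).Nonempty := by
  obtain ⟨ψ, hψ, hxψ⟩ := mem_biUnion.mp hx
  exact ⟨ψ, mem_filter.mpr ⟨hψ, hxψ⟩⟩

variable [DecidableEq A]

def IsQHierarchical (S : Finset A) (varsOf : A → Finset V) (free : Finset V) : Prop :=
  (∀ x ∈ S.biUnion varsOf, ∀ y ∈ S.biUnion varsOf,
      NestedOrDisjoint (atomsOf S varsOf x) (atomsOf S varsOf y)) ∧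
    ∀ x ∈ S.biUnion varsOf, ∀ y ∈ S.biUnion varsOf,
      atomsOf S varsOf x ⊂ atomsOf S varsOf y → x ∈ free → y ∈ free

def IsTHierarchical (S : Finset A) (varsOf : A → Finset V) (free : Finset V) : Prop :=
  (∀ x ∈ S.biUnion varsOf, x ∉ free → ∀ y ∈ S.biUnion varsOf, y ∉ free →
      NestedOrDisjoint (atomsOf S varsOf x) (atomsOf S varsOf y)) ∧
    ∀ x ∈ free, ∀ y ∈ S.biUnion varsOf, y ∉ free →
      atomsOf S varsOf x ∩ atomsOf S varsOf y = ∅ ∨ atomsOf S varsOf y ⊆ atomsOf S varsOf x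

variable {S T : Finset A} {varsOf : A → Finset V} {free : Finset V}

theorem IsQHierarchical.of_subset (h : IsQHierarchical S varsOf free) (hT : T ⊆ S) :
    IsQHierarchical T varsOf free := by
  have hvars := biUnion_subset_biUnion_of_subset_left varsOf hT
  simp only [IsQHierarchical, atomsOf_of_subset varsOf hT]
  refine ⟨fun x hx y hy => (h.1 x (hvars hx) y (hvars hy)).inter_right T, ?_⟩
  intro x hx y hy hxy
  have hne := atomsOf_of_subset varsOf hT x ▸ atomsOf_nonempty hx
  exact h.2 x (hvars hx) y (hvars hy)
    ((h.1 x (hvars hx) y (hvars hy)).ssubset_of_inter_ssubset hne hxy)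

theorem IsTHierarchical.of_subset (h : IsTHierarchical S varsOf free) (hT : T ⊆ S) :
    IsTHierarchical T varsOf free := by
  have hvars := biUnion_subset_biUnion_of_subset_left varsOf hT
  simp only [IsTHierarchical, atomsOf_of_subset varsOf hT]
  refine ⟨fun x hx hxf y hy hyf => (h.1 x (hvars hx) hxf y (hvars hy) hyf).inter_right T, ?_⟩
  intro x hx y hy hyf
  rcases h.2 x hx y (hvars hy) hyf with hdisj | hyx
  · exact Or.inl (inter_inter_eq_empty_of_inter_eq_empty hdisj T)
  · exact Or.inr (inter_subset_inter_right hyx)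

end ConjunctiveQuery

theorem core_preserves_hierarchical_general {V A : Type*} [DecidableEq V] [DecidableEq A]
    (atomSet : Finset A) (varsOf : A → Finset V) (free : Finset V)
    (A' : Finset A) (hsub : A' ⊆ atomSet) :
    -- q-hierarchical is preserved:
    (((∀ x ∈ atomSet.biUnion varsOf, ∀ y ∈ atomSet.biUnion varsOf,
          atomSet.filter (fun ψ => x ∈ varsOf ψ) ⊆ atomSet.filter (fun ψ => y ∈ varsOf ψ)
        ∨ atomSet.filter (fun ψ => y ∈ varsOf ψ) ⊆ atomSet.filter (fun ψ => x ∈ varsOf ψ)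
        ∨ atomSet.filter (fun ψ => x ∈ varsOf ψ) ∩ atomSet.filter (fun ψ => y ∈ varsOf ψ) = ∅)
      ∧ (∀ x ∈ atomSet.biUnion varsOf, ∀ y ∈ atomSet.biUnion varsOf,
          atomSet.filter (fun ψ => x ∈ varsOf ψ) ⊂ atomSet.filter (fun ψ => y ∈ varsOf ψ)
          → x ∈ free → y ∈ free)) →
     ((∀ x ∈ A'.biUnion varsOf, ∀ y ∈ A'.biUnion varsOf,
          A'.filter (fun ψ => x ∈ varsOf ψ) ⊆ A'.filter (fun ψ => y ∈ varsOf ψ)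
        ∨ A'.filter (fun ψ => y ∈ varsOf ψ) ⊆ A'.filter (fun ψ => x ∈ varsOf ψ)
        ∨ A'.filter (fun ψ => x ∈ varsOf ψ) ∩ A'.filter (fun ψ => y ∈ varsOf ψ) = ∅)
      ∧ (∀ x ∈ A'.biUnion varsOf, ∀ y ∈ A'.biUnion varsOf,
          A'.filter (fun ψ => x ∈ varsOf ψ) ⊂ A'.filter (fun ψ => y ∈ varsOf ψ)
          → x ∈ free → y ∈ free)))
    -- and t-hierarchical is preserved:
    ∧ (((∀ x ∈ atomSet.biUnion varsOf, x ∉ free →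
         ∀ y ∈ atomSet.biUnion varsOf, y ∉ free →
          atomSet.filter (fun ψ => x ∈ varsOf ψ) ⊆ atomSet.filter (fun ψ => y ∈ varsOf ψ)
        ∨ atomSet.filter (fun ψ => y ∈ varsOf ψ) ⊆ atomSet.filter (fun ψ => x ∈ varsOf ψ)
        ∨ atomSet.filter (fun ψ => x ∈ varsOf ψ) ∩ atomSet.filter (fun ψ => y ∈ varsOf ψ) = ∅)
      ∧ (∀ x ∈ free, ∀ y ∈ atomSet.biUnion varsOf, y ∉ free →
          atomSet.filter (fun ψ => x ∈ varsOf ψ) ∩ atomSet.filter (fun ψ => y ∈ varsOf ψ) = ∅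
        ∨ atomSet.filter (fun ψ => y ∈ varsOf ψ) ⊆ atomSet.filter (fun ψ => x ∈ varsOf ψ))) →
     ((∀ x ∈ A'.biUnion varsOf, x ∉ free →
       ∀ y ∈ A'.biUnion varsOf, y ∉ free →
          A'.filter (fun ψ => x ∈ varsOf ψ) ⊆ A'.filter (fun ψ => y ∈ varsOf ψ)
        ∨ A'.filter (fun ψ => y ∈ varsOf ψ) ⊆ A'.filter (fun ψ => x ∈ varsOf ψ)
        ∨ A'.filter (fun ψ => x ∈ varsOf ψ) ∩ A'.filter (fun ψ => y ∈ varsOf ψ) = ∅)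
      ∧ (∀ x ∈ free, ∀ y ∈ A'.biUnion varsOf, y ∉ free →
          A'.filter (fun ψ => x ∈ varsOf ψ) ∩ A'.filter (fun ψ => y ∈ varsOf ψ) = ∅
        ∨ A'.filter (fun ψ => y ∈ varsOf ψ) ⊆ A'.filter (fun ψ => x ∈ varsOf ψ)))) :=
  ⟨fun h => ConjunctiveQuery.IsQHierarchical.of_subset h hsub,
    fun h => ConjunctiveQuery.IsTHierarchical.of_subset h hsub⟩

/-- the homomorphic core of a q-hierarchical (t-hierarchical) CQ
is q-hierarchical (t-hierarchical).

Following the context, the core is an induced subquery of q on a subset A' of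
its atoms containing all free variables: for a variable x of the subquery,
atoms_{q'}(x) = atoms_q(x) ∩ A'.  We show both hierarchy conditions are
inherited by any such induced subquery, hence in particular by the core.
A query is given by its finite atom set `atomSet`, the variable set
`varsOf ψ` of each atom, and the set `free` of free variables;
atoms(x) = atomSet.filter (x ∈ varsOf ·). -/
theorem core_preserves_hierarchical {V A : Type*} [DecidableEq V] [DecidableEq A]
    (atomSet : Finset A) (varsOf : A → Finset V) (free : Finset V)
    (A' : Finset A) (hsub : A' ⊆ atomSet)
    (hfree : free ⊆ A'.biUnion varsOf) :
    -- q-hierarchical is preserved: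
    (((∀ x ∈ atomSet.biUnion varsOf, ∀ y ∈ atomSet.biUnion varsOf,
          atomSet.filter (fun ψ => x ∈ varsOf ψ) ⊆ atomSet.filter (fun ψ => y ∈ varsOf ψ)
        ∨ atomSet.filter (fun ψ => y ∈ varsOf ψ) ⊆ atomSet.filter (fun ψ => x ∈ varsOf ψ)
        ∨ atomSet.filter (fun ψ => x ∈ varsOf ψ) ∩ atomSet.filter (fun ψ => y ∈ varsOf ψ) = ∅)
      ∧ (∀ x ∈ atomSet.biUnion varsOf, ∀ y ∈ atomSet.biUnion varsOf,
          atomSet.filter (fun ψ => x ∈ varsOf ψ) ⊂ atomSet.filter (fun ψ => y ∈ varsOf ψ)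
          → x ∈ free → y ∈ free)) →
     ((∀ x ∈ A'.biUnion varsOf, ∀ y ∈ A'.biUnion varsOf,
          A'.filter (fun ψ => x ∈ varsOf ψ) ⊆ A'.filter (fun ψ => y ∈ varsOf ψ)
        ∨ A'.filter (fun ψ => y ∈ varsOf ψ) ⊆ A'.filter (fun ψ => x ∈ varsOf ψ)
        ∨ A'.filter (fun ψ => x ∈ varsOf ψ) ∩ A'.filter (fun ψ => y ∈ varsOf ψ) = ∅)
      ∧ (∀ x ∈ A'.biUnion varsOf, ∀ y ∈ A'.biUnion varsOf,
          A'.filter (fun ψ => x ∈ varsOf ψ) ⊂ A'.filter (fun ψ => y ∈ varsOf ψ)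
          → x ∈ free → y ∈ free)))
    -- and t-hierarchical is preserved:
    ∧ (((∀ x ∈ atomSet.biUnion varsOf, x ∉ free →
         ∀ y ∈ atomSet.biUnion varsOf, y ∉ free →
          atomSet.filter (fun ψ => x ∈ varsOf ψ) ⊆ atomSet.filter (fun ψ => y ∈ varsOf ψ)
        ∨ atomSet.filter (fun ψ => y ∈ varsOf ψ) ⊆ atomSet.filter (fun ψ => x ∈ varsOf ψ)
        ∨ atomSet.filter (fun ψ => x ∈ varsOf ψ) ∩ atomSet.filter (fun ψ => y ∈ varsOf ψ) = ∅)
      ∧ (∀ x ∈ free, ∀ y ∈ atomSet.biUnion varsOf, y ∉ free →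
          atomSet.filter (fun ψ => x ∈ varsOf ψ) ∩ atomSet.filter (fun ψ => y ∈ varsOf ψ) = ∅
        ∨ atomSet.filter (fun ψ => y ∈ varsOf ψ) ⊆ atomSet.filter (fun ψ => x ∈ varsOf ψ))) →
     ((∀ x ∈ A'.biUnion varsOf, x ∉ free →
       ∀ y ∈ A'.biUnion varsOf, y ∉ free →
          A'.filter (fun ψ => x ∈ varsOf ψ) ⊆ A'.filter (fun ψ => y ∈ varsOf ψ)
        ∨ A'.filter (fun ψ => y ∈ varsOf ψ) ⊆ A'.filter (fun ψ => x ∈ varsOf ψ)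
        ∨ A'.filter (fun ψ => x ∈ varsOf ψ) ∩ A'.filter (fun ψ => y ∈ varsOf ψ) = ∅)
      ∧ (∀ x ∈ free, ∀ y ∈ A'.biUnion varsOf, y ∉ free →
          A'.filter (fun ψ => x ∈ varsOf ψ) ∩ A'.filter (fun ψ => y ∈ varsOf ψ) = ∅
        ∨ A'.filter (fun ψ => y ∈ varsOf ψ) ⊆ A'.filter (fun ψ => x ∈ varsOf ψ)))) :=
  core_preserves_hierarchical_general atomSet varsOf free A' hsub
end

section
/- Small-domain constraint reduction: let q be a conjunctive query, C a set of small domain constraints with restricted variable set V = rvars_C(q) and M the (finite) set of assignments α : V → Dom with α(x) ∈ Dom_{q,C}(x) for all x ∈ V. If M ≠ ∅, then for every database D satisfying C, q(D) = ⋃_{α ∈ M} q_α(D), where q_α is obtained from q by substituting α(x) for x (for all x ∈ V). In particular q is equivalent, on constraint-satisfying databases, to the UCQ ⋃_{α∈M} q_α. -/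
/-- A relational signature: relation symbols with arities. -/
structure Sig where
  Rel : Type
  ar : Rel → ℕ

/-- An atom R v₁ ⋯ v_r, whose arguments are variables or constants. -/
structure QAtom (σ : Sig) (V Dom : Type) where
  R : σ.Rel
  args : Fin (σ.ar R) → V ⊕ Dom

/-- Evaluate an argument under a valuation β. -/
def evalArg {V Dom : Type} (β : V → Dom) : V ⊕ Dom → Dom := Sum.elim β id

/-- A database: an interpretation of every relation symbol. -/
def Database (σ : Sig) (Dom : Type) := ∀ R : σ.Rel, Set (Fin (σ.ar R) → Dom)

/-- A valuation β satisfies an atom in a database. -/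
def satAtom {σ : Sig} {V Dom : Type} (Db : Database σ Dom) (β : V → Dom)
    (ψ : QAtom σ V Dom) : Prop :=
  (fun i => evalArg β (ψ.args i)) ∈ Db ψ.R

/-- The k-ary result of a query with atom set q and head tuple `head`. -/
def result {σ : Sig} {V Dom : Type} (Db : Database σ Dom)
    (q : Set (QAtom σ V Dom)) {k : ℕ} (head : Fin k → V ⊕ Dom) :
    Set (Fin k → Dom) :=
  {t | ∃ β : V → Dom, (∀ ψ ∈ q, satAtom Db β ψ) ∧ t = fun i => evalArg β (head i)}

/-- A small-domain constraint R[i] ⊆ C₀. -/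
structure SDC (σ : Sig) (Dom : Type) where
  R : σ.Rel
  i : Fin (σ.ar R)
  C0 : Set Dom

/-- D satisfies R[i] ⊆ C₀ iff the i-th projection of R^D is contained in C₀. -/
def SDC.holds {σ : Sig} {Dom : Type} (c : SDC σ Dom) (Db : Database σ Dom) : Prop :=
  ∀ t ∈ Db c.R, t c.i ∈ c.C0

/-- The constraint c applies to variable x in query q. -/
def appliesTo {σ : Sig} {V Dom : Type} (c : SDC σ Dom)
    (q : Set (QAtom σ V Dom)) (x : V) : Prop :=
  ∃ ψ ∈ q, ∃ p : Fin (σ.ar ψ.R),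
    ψ.args p = Sum.inl x ∧ ψ.R = c.R ∧ (p : ℕ) = (c.i : ℕ)

/-- Dom_{q,C}(x): the intersection of all C₀ over constraints applying to x. -/
def DomOf {σ : Sig} {V Dom : Type} (C : Set (SDC σ Dom))
    (q : Set (QAtom σ V Dom)) (x : V) : Set Dom :=
  {a | ∀ c ∈ C, appliesTo c q x → a ∈ c.C0}

/-- rvars_C(q): the variables restricted by C. -/
def rvars {σ : Sig} {V Dom : Type} (C : Set (SDC σ Dom))
    (q : Set (QAtom σ V Dom)) : Set V :=
  {x | DomOf C q x ≠ Set.univ}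

open Classical in
/-- Substitute α(x) for each restricted variable x in an argument. -/
noncomputable def substArg {V Dom : Type} (rv : Set V) (α : V → Dom) :
    V ⊕ Dom → V ⊕ Dom
  | Sum.inl x => if x ∈ rv then Sum.inr (α x) else Sum.inl x
  | Sum.inr a => Sum.inr a

/-- The atom obtained by substituting α on the restricted variables. -/
noncomputable def substAtom {σ : Sig} {V Dom : Type} (rv : Set V) (α : V → Dom)
    (ψ : QAtom σ V Dom) : QAtom σ V Dom :=
  ⟨ψ.R, fun i => substArg rv α (ψ.args i)⟩

/-!
A valuation β witnessing a tuple of `q` on a database satisfying `C` takes, at every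
variable `x`, a value in each `C₀` of a constraint applying to `x`, so `β` itself is an
admissible assignment, and `q_β` returns the tuple under the same valuation. Conversely,
a valuation for `q_α` becomes one for `q` after overwriting it by `α` on the restricted
variables.
-/

section QuerySemantics

variable {σ : Sig} {V Dom : Type}

open Classical in
theorem evalArg_substArg (rv : Set V) (α β : V → Dom) (a : V ⊕ Dom) :
    evalArg β (substArg rv α a) = evalArg (rv.piecewise α β) a := by
  rcases a with x | a
  · by_cases hx : x ∈ rv <;> simp [substArg, evalArg, hx]
  · rfl

open Classical in
theorem satAtom_substAtom (Db : Database σ Dom) (rv : Set V) (α β : V → Dom)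
    (ψ : QAtom σ V Dom) :
    satAtom Db β (substAtom rv α ψ) ↔ satAtom Db (rv.piecewise α β) ψ := by
  unfold satAtom substAtom
  simp only [evalArg_substArg]

theorem result_substAtom_subset (Db : Database σ Dom) (q : Set (QAtom σ V Dom)) {k : ℕ}
    (head : Fin k → V ⊕ Dom) (rv : Set V) (α : V → Dom) :
    result Db (substAtom rv α '' q) (fun i => substArg rv α (head i)) ⊆ result Db q head := by
  classical
  rintro _ ⟨β, hβ, rfl⟩
  refine ⟨rv.piecewise α β, fun ψ hψ => ?_, by simp only [evalArg_substArg]⟩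
  exact (satAtom_substAtom Db rv α β ψ).1 (hβ _ (Set.mem_image_of_mem _ hψ))

theorem mem_result_substAtom_self {Db : Database σ Dom} {q : Set (QAtom σ V Dom)} {k : ℕ}
    (head : Fin k → V ⊕ Dom) (rv : Set V) {β : V → Dom} (hβ : ∀ ψ ∈ q, satAtom Db β ψ) :
    (fun i => evalArg β (head i))
      ∈ result Db (substAtom rv β '' q) (fun i => substArg rv β (head i)) := by
  classical
  refine ⟨β, ?_, by simp only [evalArg_substArg, Set.piecewise_same]⟩
  rintro _ ⟨ψ, hψ, rfl⟩
  rw [satAtom_substAtom, Set.piecewise_same]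
  exact hβ ψ hψ

theorem apply_mem_domOf {C : Set (SDC σ Dom)}
    {q : Set (QAtom σ V Dom)} {Db : Database σ Dom} (hDb : ∀ c ∈ C, c.holds Db)
    {β : V → Dom} (hβ : ∀ ψ ∈ q, satAtom Db β ψ) (x : V) : β x ∈ DomOf C q x := by
  rintro ⟨R, j, C0⟩ hc ⟨ψ, hψ, p, hx, rfl, hpj⟩
  obtain rfl : p = j := Fin.ext hpj
  simpa [hx, evalArg] using hDb _ hc _ (hβ ψ hψ)

end QuerySemantics

theorem small_domain_reduction_general {σ : Sig} {V Dom : Type}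
    (q : Set (QAtom σ V Dom)) (C : Set (SDC σ Dom)) {k : ℕ}
    (head : Fin k → V ⊕ Dom)
    (Db : Database σ Dom) (hDb : ∀ c ∈ C, c.holds Db) :
    result Db q head
      = ⋃ α ∈ {α : V → Dom | ∀ x ∈ rvars C q, α x ∈ DomOf C q x},
          result Db (substAtom (rvars C q) α '' q)
            (fun i => substArg (rvars C q) α (head i)) := by
  refine Set.Subset.antisymm ?_ (Set.iUnion₂_subset fun α _ => result_substAtom_subset _ _ _ _ α)
  rintro _ ⟨β, hβ, rfl⟩
  exact Set.mem_biUnion (fun x _ => apply_mem_domOf hDb hβ x)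
    (mem_result_substAtom_self head _ hβ)

/-- small-domain constraint reduction.  If the set M of
admissible assignments α (with α(x) ∈ Dom_{q,C}(x) for all restricted x) is
nonempty, then on every database satisfying the constraints, the result of q
is the union over α ∈ M of the results of the substituted queries q_α. -/
theorem small_domain_reduction {σ : Sig} {V Dom : Type}
    (q : Set (QAtom σ V Dom)) (C : Set (SDC σ Dom)) {k : ℕ}
    (head : Fin k → V ⊕ Dom)
    (hM : ∃ α : V → Dom, ∀ x ∈ rvars C q, α x ∈ DomOf C q x)
    (Db : Database σ Dom) (hDb : ∀ c ∈ C, c.holds Db) :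
    result Db q head
      = ⋃ α ∈ {α : V → Dom | ∀ x ∈ rvars C q, α x ∈ DomOf C q x},
          result Db (substAtom (rvars C q) α '' q)
            (fun i => substArg (rvars C q) α (head i)) :=
  small_domain_reduction_general q C head Db hDb
end

section
/- Applying an inclusion dependency preserves query semantics on constrained databases: let δ be the inclusion dependency R[i₁,…,i_m] ⊆ S[j₁,…,j_m], and let q contain atoms ψ₁ = R v₁⋯v_r and ψ₂ = S w₁⋯w_s such that (v_{i₁},…,v_{i_m}) = (w_{j₁},…,w_{j_m}), every w_j for j ∉ {j₁,…,j_m} is a non-free variable occurring only in ψ₂, and these w_j are pairwise distinct. Let q' be q with the atom ψ₂ removed. Then q(D) = q'(D) for every database D satisfying δ. -/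
/-! Deleting `ψ₂` can only enlarge the result. Conversely, a valuation satisfying `q'` maps `ψ₁`
into `R`, so `δ` supplies a tuple of `S` agreeing with it on the shared positions; the variables
at the other positions of `ψ₂` occur nowhere else in `q`, in `ψ₂`, or in the head, so re-valuing
them to match that tuple satisfies `ψ₂` without disturbing anything else. -/

open Function

variable {σ : Sig} {V Dom : Type}

theorem evalArg_congr {β β' : V → Dom} {a : V ⊕ Dom} (h : ∀ x, a = Sum.inl x → β x = β' x) :
    evalArg β a = evalArg β' a := by
  cases a with
  | inl x => exact h x rfl
  | inr d => rfl

theorem satAtom_congr (Db : Database σ Dom) {β β' : V → Dom} {ψ : QAtom σ V Dom}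
    (h : ∀ p x, ψ.args p = Sum.inl x → β x = β' x) : satAtom Db β ψ ↔ satAtom Db β' ψ := by
  have heq : (fun p => evalArg β (ψ.args p)) = fun p => evalArg β' (ψ.args p) :=
    funext fun p => evalArg_congr (h p)
  rw [satAtom, satAtom, heq]

theorem result_anti (Db : Database σ Dom) {q q' : Set (QAtom σ V Dom)} (hq : q' ⊆ q) {k : ℕ}
    (head : Fin k → V ⊕ Dom) : result Db q head ⊆ result Db q' head :=
  fun _ ⟨β, hβ, ht⟩ => ⟨β, fun ψ hψ => hβ ψ (hq hψ), ht⟩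

theorem exists_update_satAtom (Db : Database σ Dom) {ψ : QAtom σ V Dom} {s : Fin (σ.ar ψ.R) → Dom}
    (hs : s ∈ Db ψ.R) (β : V → Dom) (P : Set (Fin (σ.ar ψ.R)))
    (hP : ∀ p ∈ P, evalArg β (ψ.args p) = s p)
    (hprivate : ∀ p ∉ P, ∃ x, ψ.args p = Sum.inl x ∧ ∀ p', ψ.args p' = Sum.inl x → p' = p) :
    ∃ β' : V → Dom, satAtom Db β' ψ ∧ ∀ y, β' y ≠ β y → ∃ p ∉ P, ψ.args p = Sum.inl y := by
  choose x hx hx_unique using hprivate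
  let f : (Pᶜ : Set _) → V := fun p => x p p.2
  have hf : Injective f := fun p p' hpp' =>
    Subtype.ext (hx_unique p' p'.2 p (by rw [hx p p.2]; exact congrArg Sum.inl hpp'))
  refine ⟨extend f (fun p => s p) β, ?_, fun y hy => ?_⟩
  · have heq : (fun p => evalArg (extend f (fun p => s p) β) (ψ.args p)) = s := by
      funext p
      by_cases hp : p ∈ P
      · rw [← hP p hp]
        refine evalArg_congr fun y hpy => extend_apply' _ _ _ ?_
        rintro ⟨p', rfl⟩
        exact p'.2 (hx_unique p' p'.2 p hpy ▸ hp)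
      · rw [hx p hp]
        exact hf.extend_apply (fun p : (Pᶜ : Set _) => s p) β ⟨p, hp⟩
    rw [satAtom, heq]
    exact hs
  · by_contra hnone
    refine hy (extend_apply' _ _ _ ?_)
    rintro ⟨p, rfl⟩
    exact hnone ⟨p, p.2, hx p p.2⟩

theorem inclusion_dependency_preserves_semantics_general {σ : Sig} {V Dom : Type}
    (q : Set (QAtom σ V Dom)) {k : ℕ} (head : Fin k → V ⊕ Dom)
    (free : Set V) (hhead : ∀ i x, head i = Sum.inl x → x ∈ free)
    (R S : σ.Rel) (m : ℕ)
    (iMap : Fin m → Fin (σ.ar R)) (jMap : Fin m → Fin (σ.ar S))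
    (v : Fin (σ.ar R) → V ⊕ Dom) (w : Fin (σ.ar S) → V ⊕ Dom)
    (hψ₁ : (⟨R, v⟩ : QAtom σ V Dom) ∈ q)
    (hne : (⟨R, v⟩ : QAtom σ V Dom) ≠ (⟨S, w⟩ : QAtom σ V Dom))
    (hagree : ∀ k' : Fin m, v (iMap k') = w (jMap k'))
    (hw : ∀ p : Fin (σ.ar S), p ∉ Set.range jMap →
      ∃ x : V, w p = Sum.inl x ∧ x ∉ free
        ∧ (∀ ψ ∈ q, (∃ p', ψ.args p' = Sum.inl x) → ψ = (⟨S, w⟩ : QAtom σ V Dom))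
        ∧ (∀ p', w p' = Sum.inl x → p' = p))
    (Db : Database σ Dom)
    (hδ : ∀ t ∈ Db R, ∃ s ∈ Db S, ∀ k' : Fin m, s (jMap k') = t (iMap k')) :
    result Db q head = result Db (q \ {(⟨S, w⟩ : QAtom σ V Dom)}) head := by
  refine (result_anti Db Set.sdiff_subset head).antisymm ?_
  rintro _ ⟨β, hβ, rfl⟩
  obtain ⟨s, hs, hsv⟩ := hδ _ (hβ _ ⟨hψ₁, hne⟩)
  obtain ⟨β', hβ'w, hβ'β⟩ := exists_update_satAtom Db (ψ := ⟨S, w⟩) hs β (Set.range jMap)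
    (by rintro _ ⟨k', rfl⟩; exact (congrArg (evalArg β) (hagree k')).symm.trans (hsv k').symm)
    (fun p hp => (hw p hp).imp fun _ ⟨hpx, _, _, hunique⟩ => ⟨hpx, hunique⟩)
  have hprivate : ∀ y, β' y ≠ β y → y ∉ free ∧
      ∀ ψ ∈ q, (∃ p', ψ.args p' = Sum.inl y) → ψ = (⟨S, w⟩ : QAtom σ V Dom) := by
    intro y hy
    obtain ⟨p, hp, hpy⟩ := hβ'β y hy
    obtain ⟨x, hpx, hfree, hocc, -⟩ := hw p hp
    obtain rfl : x = y := Sum.inl_injective (hpx.symm.trans hpy)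
    exact ⟨hfree, hocc⟩
  refine ⟨β', fun ψ hψ => ?_, funext fun i => evalArg_congr fun y hiy => ?_⟩
  · by_cases hψw : ψ = ⟨S, w⟩
    · exact hψw ▸ hβ'w
    · refine (satAtom_congr Db fun p y hpy => ?_).1 (hβ ψ ⟨hψ, hψw⟩)
      by_contra hy
      exact hψw ((hprivate y (Ne.symm hy)).2 ψ hψ ⟨p, hpy⟩)
  · by_contra hy
    exact (hprivate y (Ne.symm hy)).1 (hhead i y hiy)

/-- applying an inclusion dependency
δ = R[i₁,…,i_m] ⊆ S[j₁,…,j_m] preserves query semantics on δ-satisfying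
databases.  q contains atoms ψ₁ = R v and ψ₂ = S w with v(i_k) = w(j_k); every
w-position outside {j₁,…,j_m} holds a non-free variable occurring only in ψ₂
and only at that position, and these variables are pairwise distinct.  Then
removing ψ₂ does not change the query result on databases satisfying δ. -/
theorem inclusion_dependency_preserves_semantics {σ : Sig} {V Dom : Type}
    (q : Set (QAtom σ V Dom)) {k : ℕ} (head : Fin k → V ⊕ Dom)
    (free : Set V) (hhead : ∀ i x, head i = Sum.inl x → x ∈ free)
    (R S : σ.Rel) (m : ℕ)
    (iMap : Fin m → Fin (σ.ar R)) (jMap : Fin m → Fin (σ.ar S))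
    (v : Fin (σ.ar R) → V ⊕ Dom) (w : Fin (σ.ar S) → V ⊕ Dom)
    (hψ₁ : (⟨R, v⟩ : QAtom σ V Dom) ∈ q) (hψ₂ : (⟨S, w⟩ : QAtom σ V Dom) ∈ q)
    (hne : (⟨R, v⟩ : QAtom σ V Dom) ≠ (⟨S, w⟩ : QAtom σ V Dom))
    (hagree : ∀ k' : Fin m, v (iMap k') = w (jMap k'))
    (hw : ∀ p : Fin (σ.ar S), p ∉ Set.range jMap →
      ∃ x : V, w p = Sum.inl x ∧ x ∉ free
        ∧ (∀ ψ ∈ q, (∃ p', ψ.args p' = Sum.inl x) → ψ = (⟨S, w⟩ : QAtom σ V Dom))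
        ∧ (∀ p', w p' = Sum.inl x → p' = p))
    (Db : Database σ Dom)
    (hδ : ∀ t ∈ Db R, ∃ s ∈ Db S, ∀ k' : Fin m, s (jMap k') = t (iMap k')) :
    result Db q head = result Db (q \ {(⟨S, w⟩ : QAtom σ V Dom)}) head :=
  inclusion_dependency_preserves_semantics_general q head free hhead R S m iMap jMap v w hψ₁ hne
    hagree hw Db hδ
end

section
/- Applying an inclusion dependency preserves q-hierarchicality: with q, q' as in the inclusion-dependency application (q' = q minus the atom ψ₂ = S w₁⋯w_s, where each w_j for j ∉ {j₁,…,j_m} is a non-free variable with atoms_q(w_j) = {ψ₂}, and Vars(q') = Vars(q) \ {w_j : j ∉ {j₁,…,j_m}}): if q is q-hierarchical, then q' is q-hierarchical. -/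
section GeneralizedBooleanAlgebra

variable {α : Type*} [GeneralizedBooleanAlgebra α] {s t : α}

theorem sdiff_nested_or_disjoint (u : α) (h : s ≤ t ∨ t ≤ s ∨ Disjoint s t) :
    s \ u ≤ t \ u ∨ t \ u ≤ s \ u ∨ Disjoint (s \ u) (t \ u) :=
  h.imp sdiff_le_sdiff_right <| Or.imp sdiff_le_sdiff_right (Disjoint.mono sdiff_le sdiff_le)

theorem lt_of_sdiff_lt_sdiff_of_nested_or_disjoint {u : α}
    (h : s ≤ t ∨ t ≤ s ∨ Disjoint s t) (hs : s \ u ≠ ⊥) (hlt : s \ u < t \ u) : s < t := by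
  rcases h with hst | hts | hdisj
  · refine hst.lt_of_ne ?_
    rintro rfl
    exact hlt.ne rfl
  · exact absurd (sdiff_le_sdiff_right hts) hlt.not_ge
  · have hdisj' : Disjoint (s \ u) (t \ u) := hdisj.mono sdiff_le sdiff_le
    exact absurd (hdisj'.mono_right hlt.le).eq_bot_of_self hs

end GeneralizedBooleanAlgebra

theorem remove_atom_preserves_qHierarchical_general {V A : Type*} [DecidableEq A]
    (vars free : Finset V)
    (atoms : V → Finset A) (ψ₂ : A)
    -- q is q-hierarchical:
    (hq1 : ∀ x ∈ vars, ∀ y ∈ vars,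
        atoms x ⊆ atoms y ∨ atoms y ⊆ atoms x ∨ atoms x ∩ atoms y = ∅)
    (hq2 : ∀ x ∈ vars, ∀ y ∈ vars, atoms x ⊂ atoms y → x ∈ free → y ∈ free) :
    -- q' is q-hierarchical (its variables are those with atoms(x) \ {ψ₂} ≠ ∅):
    (∀ x ∈ vars, (atoms x \ {ψ₂}).Nonempty → ∀ y ∈ vars, (atoms y \ {ψ₂}).Nonempty →
        atoms x \ {ψ₂} ⊆ atoms y \ {ψ₂} ∨ atoms y \ {ψ₂} ⊆ atoms x \ {ψ₂}
          ∨ (atoms x \ {ψ₂}) ∩ (atoms y \ {ψ₂}) = ∅)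
    ∧ (∀ x ∈ vars, (atoms x \ {ψ₂}).Nonempty → ∀ y ∈ vars, (atoms y \ {ψ₂}).Nonempty →
        atoms x \ {ψ₂} ⊂ atoms y \ {ψ₂} → x ∈ free → y ∈ free) := by
  have nested x (hx : x ∈ vars) y (hy : y ∈ vars) :
      atoms x ≤ atoms y ∨ atoms y ≤ atoms x ∨ Disjoint (atoms x) (atoms y) := by
    simpa only [Finset.disjoint_iff_inter_eq_empty] using hq1 x hx y hy
  refine ⟨fun x hx _ y hy _ => ?_, fun x hx hxne y hy _ hlt hxf => ?_⟩
  · simpa only [Finset.disjoint_iff_inter_eq_empty] using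
      sdiff_nested_or_disjoint {ψ₂} (nested x hx y hy)
  · exact hq2 x hx y hy
      (lt_of_sdiff_lt_sdiff_of_nested_or_disjoint (nested x hx y hy) hxne.ne_empty hlt) hxf

/-- applying an inclusion dependency preserves q-hierarchicality.
q' is q with the atom ψ₂ removed; the variables removed with ψ₂ are exactly
those x with atoms(x) = {ψ₂} (all of which are non-free, hypothesis `hW`),
so Vars(q') = {x ∈ Vars(q) : atoms(x) \ {ψ₂} ≠ ∅} and
atoms_{q'}(x) = atoms(x) \ {ψ₂}.  If q is q-hierarchical, so is q'. -/
theorem remove_atom_preserves_qHierarchical {V A : Type*} [DecidableEq A]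
    (vars free : Finset V) (hfv : free ⊆ vars)
    (atoms : V → Finset A) (ψ₂ : A)
    (hvars : ∀ x ∈ vars, (atoms x).Nonempty)
    (hW : ∀ x ∈ vars, atoms x = {ψ₂} → x ∉ free)
    -- q is q-hierarchical:
    (hq1 : ∀ x ∈ vars, ∀ y ∈ vars,
        atoms x ⊆ atoms y ∨ atoms y ⊆ atoms x ∨ atoms x ∩ atoms y = ∅)
    (hq2 : ∀ x ∈ vars, ∀ y ∈ vars, atoms x ⊂ atoms y → x ∈ free → y ∈ free) :
    -- q' is q-hierarchical (its variables are those with atoms(x) \ {ψ₂} ≠ ∅):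
    (∀ x ∈ vars, (atoms x \ {ψ₂}).Nonempty → ∀ y ∈ vars, (atoms y \ {ψ₂}).Nonempty →
        atoms x \ {ψ₂} ⊆ atoms y \ {ψ₂} ∨ atoms y \ {ψ₂} ⊆ atoms x \ {ψ₂}
          ∨ (atoms x \ {ψ₂}) ∩ (atoms y \ {ψ₂}) = ∅)
    ∧ (∀ x ∈ vars, (atoms x \ {ψ₂}).Nonempty → ∀ y ∈ vars, (atoms y \ {ψ₂}).Nonempty →
        atoms x \ {ψ₂} ⊂ atoms y \ {ψ₂} → x ∈ free → y ∈ free) :=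
  remove_atom_preserves_qHierarchical_general vars free atoms ψ₂ hq1 hq2
end
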